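/- Let 0 < p ≤ 1, let X be a p-Banach space over 𝔽 = ℝ or ℂ, and let 𝒳 be a basis of X. Then 𝒳 is almost greedy if and only if there is C > 0 such that ‖f − P_A(f)‖ ≤ C·‖f − a·𝟙_{ε,B}‖ for all f ∈ X, all greedy sets A of f, all B ⊂ ℕ with |B| ≤ |A| and A ∩ B = ∅, all signs ε on B, and all a ∈ 𝔽. -/

import Mathlib

open scoped BigOperators

noncomputable section

/-- A basis of a `p`-Banach space over `𝕜` (`𝕜 = ℝ` or `ℂ`), bundled with the `p`-norm
`N`, the basis vectors `e`, and the biorthogonal functionals `coord`. -/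
structure PBasis (𝕜 : Type*) [RCLike 𝕜] (X : Type*) [AddCommGroup X] [Module 𝕜 X]
    (p : ℝ) : Type _ where
  /-- the `p`-norm of the space -/
  N : X → ℝ
  N_nonneg : ∀ f : X, 0 ≤ N f
  N_eq_zero_iff : ∀ f : X, N f = 0 ↔ f = 0
  N_smul : ∀ (t : 𝕜) (f : X), N (t • f) = ‖t‖ * N f
  N_padd : ∀ f g : X, N (f + g) ^ p ≤ N f ^ p + N g ^ p
  /-- completeness with respect to the `p`-norm -/
  complete : ∀ u : ℕ → X,
      (∀ ε : ℝ, 0 < ε → ∃ n₀ : ℕ, ∀ m n : ℕ, n₀ ≤ m → n₀ ≤ n → N (u m - u n) < ε) →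
      ∃ f : X, ∀ ε : ℝ, 0 < ε → ∃ n₀ : ℕ, ∀ n : ℕ, n₀ ≤ n → N (u n - f) < ε
  /-- the basis vectors -/
  e : ℕ → X
  /-- the biorthogonal functionals -/
  coord : ℕ → X →ₗ[𝕜] 𝕜
  biorth : ∀ n m : ℕ, coord n (e m) = if n = m then (1 : 𝕜) else 0
  /-- the closed linear span of the basis vectors is the whole space -/
  dense_span : ∀ f : X, ∀ ε : ℝ, 0 < ε →
      ∃ g ∈ Submodule.span 𝕜 (Set.range e), N (f - g) < ε
  e_bdd : ∃ c : ℝ, ∀ n : ℕ, N (e n) ≤ c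
  coord_bdd : ∃ c : ℝ, ∀ (n : ℕ) (f : X), ‖coord n f‖ ≤ c * N f

namespace PBasis

variable {𝕜 : Type*} [RCLike 𝕜] {X : Type*} [AddCommGroup X] [Module 𝕜 X] {p : ℝ}

/-- The projection `P_A f = ∑_{n ∈ A} x_n^*(f) x_n`. -/
def proj (bs : PBasis 𝕜 X p) (A : Finset ℕ) (f : X) : X :=
  ∑ n ∈ A, bs.coord n f • bs.e n

/-- The support of `f`. -/
def supp (bs : PBasis 𝕜 X p) (f : X) : Set ℕ := {n | bs.coord n f ≠ 0}

/-- `A` is a greedy set of `f`: `min_{n ∈ A} |x_n^*(f)| ≥ max_{m ∉ A} |x_m^*(f)|`. -/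
def IsGreedySet (bs : PBasis 𝕜 X p) (f : X) (A : Finset ℕ) : Prop :=
  ∀ n ∈ A, ∀ m : ℕ, m ∉ A → ‖bs.coord m f‖ ≤ ‖bs.coord n f‖

/-- `𝟙_{ε,A} = ∑_{j ∈ A} ε_j x_j`. -/
def indSign (bs : PBasis 𝕜 X p) (ε : ℕ → 𝕜) (A : Finset ℕ) : X :=
  ∑ j ∈ A, ε j • bs.e j

/-- `𝟙_A = ∑_{j ∈ A} x_j`. -/
def ind (bs : PBasis 𝕜 X p) (A : Finset ℕ) : X := ∑ j ∈ A, bs.e j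

/-- `ε` is a sign on `A`. -/
def IsSign (ε : ℕ → 𝕜) (A : Finset ℕ) : Prop := ∀ j ∈ A, ‖ε j‖ = 1

/-- `min_{n ∈ A} |x_n^*(f)|`. -/
def minCoef (bs : PBasis 𝕜 X p) (f : X) (A : Finset ℕ) : ℝ :=
  sInf ((fun n => ‖bs.coord n f‖) '' (A : Set ℕ))

/-- `‖f − P_A(f)‖ ≤ C·σ_m(f)` for every greedy set `A` of cardinality `m`. -/
def IsGreedyWith (bs : PBasis 𝕜 X p) (C : ℝ) : Prop :=
  ∀ (f : X) (A B : Finset ℕ) (a : ℕ → 𝕜), bs.IsGreedySet f A → B.card ≤ A.card →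
    bs.N (f - bs.proj A f) ≤ C * bs.N (f - ∑ j ∈ B, a j • bs.e j)

/-- `‖f − P_A(f)‖ ≤ C·ρ_m(f)` for every greedy set `A` of cardinality `m`, where
`ρ_m(f) = inf {‖f − α 𝟙_{ε,B}‖ : |B| = m, ε sign}` and `α = min_{n ∈ A} |x_n^*(f)|`. -/
def IsRGPCCWith (bs : PBasis 𝕜 X p) (C : ℝ) : Prop :=
  ∀ (f : X) (A B : Finset ℕ) (ε : ℕ → 𝕜), bs.IsGreedySet f A → B.card = A.card →
    IsSign ε B →
    bs.N (f - bs.proj A f) ≤ C * bs.N (f - ((bs.minCoef f A : ℝ) : 𝕜) • bs.indSign ε B)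

/-- `‖f − P_A(f)‖ ≤ C·ϱ_m(f)` for every greedy set `A` of cardinality `m`, where
`ϱ_m(f) = inf {‖f − α 𝟙_B‖ : |B| = m}` and `α = min_{n ∈ A} |x_n^*(f)|`. -/
def IsURGPCCWith (bs : PBasis 𝕜 X p) (C : ℝ) : Prop :=
  ∀ (f : X) (A B : Finset ℕ), bs.IsGreedySet f A → B.card = A.card →
    bs.N (f - bs.proj A f) ≤ C * bs.N (f - ((bs.minCoef f A : ℝ) : 𝕜) • bs.ind B)

/-- `K`-unconditionality. -/
def IsUncondWith (bs : PBasis 𝕜 X p) (K : ℝ) : Prop :=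
  ∀ (A : Finset ℕ) (f : X), bs.N (bs.proj A f) ≤ K * bs.N f

/-- `C`-quasi-greediness. -/
def IsQuasiGreedyWith (bs : PBasis 𝕜 X p) (C : ℝ) : Prop :=
  ∀ (f : X) (A : Finset ℕ), bs.IsGreedySet f A → bs.N (f - bs.proj A f) ≤ C * bs.N f

/-- `C`-almost-greediness. -/
def IsAlmostGreedyWith (bs : PBasis 𝕜 X p) (C : ℝ) : Prop :=
  ∀ (f : X) (A B : Finset ℕ), bs.IsGreedySet f A → B.card ≤ A.card →
    bs.N (f - bs.proj A f) ≤ C * bs.N (f - bs.proj B f)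

/-- `D`-democracy. -/
def IsDemocraticWith (bs : PBasis 𝕜 X p) (D : ℝ) : Prop :=
  ∀ A B : Finset ℕ, A.card ≤ B.card → bs.N (bs.ind A) ≤ D * bs.N (bs.ind B)

/-- `D`-superdemocracy. -/
def IsSuperdemocraticWith (bs : PBasis 𝕜 X p) (D : ℝ) : Prop :=
  ∀ (A B : Finset ℕ) (ε η : ℕ → 𝕜), A.card ≤ B.card → IsSign ε A → IsSign η B →
    bs.N (bs.indSign ε A) ≤ D * bs.N (bs.indSign η B)

/-- `A < B`, i.e. every element of `A` is smaller than every element of `B`. -/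
def FinsetBefore (A B : Finset ℕ) : Prop := ∀ a ∈ A, ∀ b ∈ B, a < b

open scoped Classical in
/-- `sgn z = z/|z|` (with the convention `sgn 0 = 1`). -/
def sgn (z : 𝕜) : 𝕜 := if z = 0 then 1 else z / ((‖z‖ : ℝ) : 𝕜)

end PBasis

/-!
Both conditions imply a weak form of almost greediness, `IsDisjointBlockGreedyWith`, in which the
competitor `P_D v` must be a block `a 𝟙_{ε,D}` disjoint from the greedy set. This weak form already
gives quasi-greediness and the democracy estimate `s ‖𝟙_{ε,D}‖ ≲ ‖h‖` for every `s` below the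
coefficients of `h` on a greedy set of size at least `|D|`.

Almost greedy ⇒ disjoint bound: for `g = f - a 𝟙_{ε,B}` and a greedy set `Λ` of `g` of size `|A|`,
`f - P_Λ f = (g - P_Λ g) + a 𝟙_{ε,B \ Λ}`, and `‖a‖` is at most twice a lower bound for the
coefficients of `g` on `Λ`.

Disjoint bound ⇒ almost greedy: for `g = f - P_B f`, `f - P_A f = (g - P_{A \ B} g) + P_{B \ A} f`.
The coefficients of `f` on `B \ A` lie below the greedy threshold `α` of `A`, and peeling off
dyadic layers `2^{-k} α 𝟙_{ε_k,D_k}` (`p`-convexity) reduces `P_{B \ A} f` to the democracy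
estimate.
-/

lemma rpow_le_mul_rpow_of_le_mul {p x y C : ℝ} (hx : 0 ≤ x) (hy : 0 ≤ y) (hC : 0 ≤ C)
    (hp : 0 ≤ p) (h : x ≤ C * y) : x ^ p ≤ C ^ p * y ^ p :=
  (Real.rpow_le_rpow hx h hp).trans_eq (Real.mul_rpow hC hy)

lemma le_rpow_inv_mul_of_rpow_le_mul {p x y K : ℝ} (hp : 0 < p) (hx : 0 ≤ x) (hy : 0 ≤ y)
    (hK : 0 ≤ K) (h : x ^ p ≤ K * y ^ p) : x ≤ K ^ p⁻¹ * y := by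
  rwa [← Real.rpow_le_rpow_iff hx (by positivity) hp, Real.mul_rpow (by positivity) hy,
    Real.rpow_inv_rpow hK hp.ne']

lemma le_of_forall_pos_le_add_mul {a b K : ℝ} (hK : 0 ≤ K) (h : ∀ δ > 0, a ≤ b + K * δ) :
    a ≤ b := by
  refine le_of_forall_pos_le_add fun δ hδ => (h (δ / (K + 1)) (by positivity)).trans ?_
  rw [mul_div_assoc']
  gcongr
  rw [div_le_iff₀ (by positivity)]
  nlinarith

namespace PBasis

variable {𝕜 : Type*} [RCLike 𝕜] {X : Type*} [AddCommGroup X] [Module 𝕜 X] {p : ℝ}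

open Filter Topology

variable (bs : PBasis 𝕜 X p)

lemma N_zero : bs.N 0 = 0 := (bs.N_eq_zero_iff 0).mpr rfl

lemma N_neg (f : X) : bs.N (-f) = bs.N f := by
  simpa using bs.N_smul (-1) f

lemma rpow_N_smul (t : 𝕜) (f : X) : bs.N (t • f) ^ p = ‖t‖ ^ p * bs.N f ^ p := by
  rw [bs.N_smul, Real.mul_rpow (norm_nonneg t) (bs.N_nonneg f)]

lemma rpow_N_sub_le (f g : X) : bs.N (f - g) ^ p ≤ bs.N f ^ p + bs.N g ^ p := by
  simpa only [sub_eq_add_neg, bs.N_neg] using bs.N_padd f (-g)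

lemma rpow_N_sum_le (hp : 0 < p) {ι : Type*} (s : Finset ι) (v : ι → X) :
    bs.N (∑ i ∈ s, v i) ^ p ≤ ∑ i ∈ s, bs.N (v i) ^ p := by
  classical
  induction s using Finset.induction with
  | empty => simp [bs.N_zero, Real.zero_rpow hp.ne']
  | insert x s hx ih =>
    rw [Finset.sum_insert hx, Finset.sum_insert hx]
    exact (bs.N_padd _ _).trans (by linarith)

lemma coord_sum_smul_e (c : ℕ → 𝕜) (A : Finset ℕ) (n : ℕ) :
    bs.coord n (∑ j ∈ A, c j • bs.e j) = if n ∈ A then c n else 0 := by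
  simp_rw [map_sum, map_smul, bs.biorth, smul_eq_mul, mul_ite, mul_one, mul_zero,
    Finset.sum_ite_eq]

lemma coord_proj (A : Finset ℕ) (f : X) (n : ℕ) :
    bs.coord n (bs.proj A f) = if n ∈ A then bs.coord n f else 0 :=
  bs.coord_sum_smul_e _ A n

lemma coord_indSign (ε : ℕ → 𝕜) (A : Finset ℕ) (n : ℕ) :
    bs.coord n (bs.indSign ε A) = if n ∈ A then ε n else 0 :=
  bs.coord_sum_smul_e ε A n

lemma proj_congr {A : Finset ℕ} {u v : X} (h : ∀ n ∈ A, bs.coord n u = bs.coord n v) :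
    bs.proj A u = bs.proj A v :=
  Finset.sum_congr rfl fun n hn => by rw [h n hn]

lemma proj_eq_smul_indSign {A : Finset ℕ} {v : X} {a : 𝕜} {ε : ℕ → 𝕜}
    (h : ∀ j ∈ A, bs.coord j v = a * ε j) : bs.proj A v = a • bs.indSign ε A := by
  rw [indSign, Finset.smul_sum]
  exact Finset.sum_congr rfl fun n hn => by rw [h n hn, smul_smul]

lemma indSign_one (A : Finset ℕ) : bs.indSign (fun _ => 1) A = bs.ind A := by
  simp [indSign, ind]

lemma proj_add (A : Finset ℕ) (x y : X) : bs.proj A (x + y) = bs.proj A x + bs.proj A y := by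
  simp only [proj, map_add, add_smul, Finset.sum_add_distrib]

lemma proj_smul_indSign (Λ B : Finset ℕ) (ε : ℕ → 𝕜) (a : 𝕜) :
    bs.proj Λ (a • bs.indSign ε B) = a • bs.indSign ε (B ∩ Λ) := by
  simp only [proj, map_smul, coord_indSign, smul_eq_mul, mul_ite, mul_zero, ite_smul, zero_smul,
    Finset.sum_ite_mem]
  rw [Finset.inter_comm, indSign, Finset.smul_sum]
  simp only [smul_smul]

lemma indSign_eq_add (ε : ℕ → 𝕜) (B Λ : Finset ℕ) :
    bs.indSign ε B = bs.indSign ε (B ∩ Λ) + bs.indSign ε (B \ Λ) := by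
  exact (Finset.sum_inter_add_sum_sdiff B Λ _).symm

lemma proj_eq_add (A B : Finset ℕ) (f : X) :
    bs.proj A f = bs.proj (A ∩ B) f + bs.proj (A \ B) f := by
  exact (Finset.sum_inter_add_sum_sdiff A B _).symm

lemma coord_ind (A : Finset ℕ) (n : ℕ) : bs.coord n (bs.ind A) = if n ∈ A then 1 else 0 := by
  rw [← indSign_one, coord_indSign]

lemma eventually_coord_eq_zero_of_mem_span {g : X} (hg : g ∈ Submodule.span 𝕜 (Set.range bs.e)) :
    ∀ᶠ j in atTop, bs.coord j g = 0 := by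
  induction hg using Submodule.span_induction with
  | mem x hx =>
    obtain ⟨i, rfl⟩ := hx
    filter_upwards [eventually_ne_atTop i] with j hj
    simp [bs.biorth, hj]
  | zero => simp
  | add x y _ _ hx hy =>
    filter_upwards [hx, hy] with j hxj hyj
    simp [hxj, hyj]
  | smul t x _ hx =>
    filter_upwards [hx] with j hxj
    simp [hxj]

lemma tendsto_coord (f : X) : Tendsto (fun j => bs.coord j f) atTop (𝓝 0) := by
  obtain ⟨c, hc⟩ := bs.coord_bdd
  rw [NormedAddGroup.tendsto_nhds_zero]
  intro δ hδ
  have hc1 : 0 < |c| + 1 := by positivity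
  obtain ⟨g, hg, hfg⟩ := bs.dense_span f (δ / (|c| + 1)) (by positivity)
  filter_upwards [bs.eventually_coord_eq_zero_of_mem_span hg] with j hj
  calc ‖bs.coord j f‖ = ‖bs.coord j (f - g)‖ := by rw [map_sub, hj, sub_zero]
    _ ≤ |c| * bs.N (f - g) := (hc j _).trans (by gcongr; exacts [bs.N_nonneg _, le_abs_self c])
    _ ≤ |c| * (δ / (|c| + 1)) := by gcongr
    _ < δ := by rw [mul_div_assoc', div_lt_iff₀ hc1]; nlinarith

lemma exists_notMem_forall_norm_coord_le (f : X) (Λ : Finset ℕ) :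
    ∃ j ∉ Λ, ∀ i ∉ Λ, ‖bs.coord i f‖ ≤ ‖bs.coord j f‖ := by
  by_cases hzero : ∀ i ∉ Λ, bs.coord i f = 0
  · obtain ⟨j, hj⟩ := Infinite.exists_notMem_finset Λ
    exact ⟨j, hj, fun i hi => by rw [hzero i hi, hzero j hj]⟩
  push Not at hzero
  obtain ⟨j₀, hj₀Λ, hj₀⟩ := hzero
  have hlim := (bs.tendsto_coord f).norm
  rw [norm_zero] at hlim
  obtain ⟨N, hN⟩ := eventually_atTop.mp <| hlim.eventually (gt_mem_nhds (norm_pos_iff.mpr hj₀))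
  -- outside `Λ` the maximum is attained among `j₀` and the indices below `N`
  obtain ⟨j, hj, hjmax⟩ := ((insert j₀ (Finset.range N)) \ Λ).exists_max_image
    (fun i => ‖bs.coord i f‖) ⟨j₀, by simp [hj₀Λ]⟩
  refine ⟨j, (Finset.mem_sdiff.mp hj).2, fun i hi => ?_⟩
  by_cases hiN : i < N
  · exact hjmax i (by simp [hi, hiN])
  · have hj₀j := hjmax j₀ (by simp [hj₀Λ])
    have := hN i (not_lt.mp hiN)
    linarith

lemma exists_isGreedySet_card (f : X) (m : ℕ) :
    ∃ Λ : Finset ℕ, Λ.card = m ∧ bs.IsGreedySet f Λ := by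
  induction m with
  | zero => exact ⟨∅, rfl, fun n hn => absurd hn (Finset.notMem_empty n)⟩
  | succ m ih =>
    obtain ⟨Λ, hcard, hΛ⟩ := ih
    obtain ⟨j, hjΛ, hjmax⟩ := bs.exists_notMem_forall_norm_coord_le f Λ
    refine ⟨insert j Λ, by rw [Finset.card_insert_of_notMem hjΛ, hcard], ?_⟩
    intro n hn i hi
    rw [Finset.mem_insert, not_or] at hi
    rcases Finset.mem_insert.mp hn with rfl | hnΛ
    · exact hjmax i hi.2
    · exact hΛ n hnΛ i hi.2

lemma exists_card_disjoint_rpow_N_proj_le (hp : 0 < p) (f : X) (S : Finset ℕ) (n : ℕ)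
    {δ : ℝ} (hδ : 0 < δ) :
    ∃ F : Finset ℕ, F.card = n ∧ Disjoint F S ∧ bs.N (bs.proj F f) ^ p ≤ δ := by
  obtain ⟨c, hc⟩ := bs.e_bdd
  have hsmall : Tendsto (fun j => ‖bs.coord j f‖ ^ p * |c| ^ p) atTop (𝓝 0) := by
    simpa [Real.zero_rpow hp.ne'] using
      ((bs.tendsto_coord f).norm.rpow_const (Or.inr hp.le)).mul_const (|c| ^ p)
  obtain ⟨N, hN⟩ := eventually_atTop.mp <|
    hsmall.eventually (ge_mem_nhds (show 0 < δ / (n + 1) by positivity))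
  set b := max N (S.sup id + 1)
  refine ⟨Finset.Ico b (b + n), by simp, ?_, ?_⟩
  · refine Finset.disjoint_left.mpr fun j hj hjS => ?_
    have := Finset.le_sup (f := id) hjS
    simp only [Finset.mem_Ico, id, b] at hj this
    omega
  · calc bs.N (bs.proj (Finset.Ico b (b + n)) f) ^ p
        ≤ ∑ j ∈ Finset.Ico b (b + n), bs.N (bs.coord j f • bs.e j) ^ p :=
          bs.rpow_N_sum_le hp _ _
      _ ≤ ∑ _j ∈ Finset.Ico b (b + n), δ / (n + 1) := by
          refine Finset.sum_le_sum fun j hj => ?_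
          rw [bs.rpow_N_smul]
          refine le_trans ?_ (hN j (le_trans (le_max_left _ _) (Finset.mem_Ico.mp hj).1))
          gcongr
          exacts [bs.N_nonneg _, (hc j).trans (le_abs_self c)]
      _ ≤ δ := by
          rw [Finset.sum_const, Nat.card_Ico, add_tsub_cancel_left, nsmul_eq_mul,
            mul_div_assoc', div_le_iff₀ (by positivity)]
          nlinarith

namespace IsGreedySet

variable {bs} {f : X} {A : Finset ℕ}

lemma exists_threshold (hA : bs.IsGreedySet f A) :
    ∃ α : ℝ, 0 ≤ α ∧ (∀ n ∈ A, α ≤ ‖bs.coord n f‖) ∧ ∀ m ∉ A, ‖bs.coord m f‖ ≤ α := by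
  rcases A.eq_empty_or_nonempty with rfl | hne
  · obtain ⟨c, hc⟩ := bs.coord_bdd
    refine ⟨|c| * bs.N f, mul_nonneg (abs_nonneg c) (bs.N_nonneg f), by simp,
      fun m _ => (hc m f).trans ?_⟩
    gcongr
    exacts [bs.N_nonneg f, le_abs_self c]
  · obtain ⟨n₀, hn₀, hmin⟩ := A.exists_min_image (fun n => ‖bs.coord n f‖) hne
    exact ⟨_, norm_nonneg _, hmin, fun m hm => hA n₀ hn₀ m hm⟩

lemma le_norm_coord_of_card_le {Λ : Finset ℕ} (hΛ : bs.IsGreedySet f Λ) (hcard : Λ.card ≤ A.card)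
    {t : ℝ} (ht : ∀ n ∈ A, t ≤ ‖bs.coord n f‖) {i : ℕ} (hi : i ∈ Λ) :
    t ≤ ‖bs.coord i f‖ := by
  by_contra! hlt
  -- every index of `A` outside `Λ` would beat the coefficient at `i ∈ Λ`
  have hAΛ : A ⊆ Λ := fun n hn => by
    by_contra hnΛ
    linarith [hΛ i hi n hnΛ, ht n hn]
  have := ht i (Finset.eq_of_subset_of_card_le hAΛ hcard ▸ hi)
  linarith

end IsGreedySet

lemma norm_sgn (z : 𝕜) : ‖sgn z‖ = 1 := by
  rw [sgn]
  split_ifs with h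
  · simp
  · rw [norm_div, RCLike.norm_ofReal, abs_norm, div_self (norm_ne_zero_iff.mpr h)]

lemma norm_sub_mul_sgn (z : 𝕜) {t : ℝ} (ht : 0 ≤ t) (htz : t ≤ ‖z‖) :
    ‖z - (t : 𝕜) * sgn z‖ = ‖z‖ - t := by
  rw [sgn]
  split_ifs with h
  · subst h
    simp [le_antisymm (by simpa using htz) ht]
  · have hz : (0 : ℝ) < ‖z‖ := norm_pos_iff.mpr h
    have key : z - (t : 𝕜) * (z / ((‖z‖ : ℝ) : 𝕜))
        = ((‖z‖ - t : ℝ) : 𝕜) / ((‖z‖ : ℝ) : 𝕜) * z := by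
      have : ((‖z‖ : ℝ) : 𝕜) ≠ 0 := by exact_mod_cast hz.ne'
      push_cast
      field_simp
    rw [key, norm_mul, norm_div, RCLike.norm_ofReal, RCLike.norm_ofReal, abs_norm,
      abs_of_nonneg (by linarith : (0 : ℝ) ≤ ‖z‖ - t)]
    field_simp

/-- Peeling off `γ 𝟙_{sgn c, D'}` with `γ = αβ/2` and `D' = {‖c m‖ > γ}` halves the bound on the
coefficients; iterating `K` times leaves a geometric series plus a remainder of size `2^{-Kp}`. -/
lemma rpow_N_sum_smul_e_le_of_iterate (hp : 0 < p) (D₀ : Finset ℕ) {α M : ℝ} (hα : 0 ≤ α)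
    (hM0 : 0 ≤ M)
    (hM : ∀ D ⊆ D₀, ∀ ε : ℕ → 𝕜, IsSign ε D → α ^ p * bs.N (bs.indSign ε D) ^ p ≤ M) (K : ℕ) :
    ∀ {β : ℝ}, 0 ≤ β → ∀ c : ℕ → 𝕜, (∀ m ∈ D₀, ‖c m‖ ≤ α * β) →
      bs.N (∑ m ∈ D₀, c m • bs.e m) ^ p ≤
        β ^ p * (M / (2 ^ p - 1) + α ^ p * (∑ m ∈ D₀, bs.N (bs.e m) ^ p) / (2 ^ p) ^ K) := by
  have h2p : 1 < (2 : ℝ) ^ p := Real.one_lt_rpow (by norm_num) hp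
  have h2p' : (2 : ℝ) ^ p - 1 ≠ 0 := by linarith
  induction K with
  | zero =>
    intro β hβ c hc
    calc bs.N (∑ m ∈ D₀, c m • bs.e m) ^ p ≤ ∑ m ∈ D₀, bs.N (c m • bs.e m) ^ p :=
          bs.rpow_N_sum_le hp _ _
      _ ≤ ∑ m ∈ D₀, (α * β) ^ p * bs.N (bs.e m) ^ p := by
          refine Finset.sum_le_sum fun m hm => ?_
          rw [bs.rpow_N_smul]
          gcongr
          exacts [Real.rpow_nonneg (bs.N_nonneg _) p, hc m hm]
      _ ≤ _ := by
          rw [← Finset.mul_sum, Real.mul_rpow hα hβ, pow_zero, div_one]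
          have : 0 ≤ β ^ p * (M / (2 ^ p - 1)) :=
            mul_nonneg (Real.rpow_nonneg hβ p) (div_nonneg hM0 (by linarith))
          nlinarith
  | succ K ih =>
    intro β hβ c hc
    set γ : ℝ := α * (β / 2)
    set D' := D₀.filter fun m => γ < ‖c m‖
    set c' : ℕ → 𝕜 := fun m => if γ < ‖c m‖ then c m - (γ : 𝕜) * sgn (c m) else c m
    have hsplit : ∑ m ∈ D₀, c m • bs.e m
        = (γ : 𝕜) • bs.indSign (fun m => sgn (c m)) D' + ∑ m ∈ D₀, c' m • bs.e m := by
      rw [indSign, Finset.smul_sum, Finset.sum_filter, ← Finset.sum_add_distrib]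
      refine Finset.sum_congr rfl fun m _ => ?_
      by_cases hm : γ < ‖c m‖
      · simp only [c', if_pos hm, smul_smul, ← add_smul, add_sub_cancel]
      · simp only [c', if_neg hm, zero_add]
    have hc' : ∀ m ∈ D₀, ‖c' m‖ ≤ α * (β / 2) := by
      intro m hm
      by_cases hγ : γ < ‖c m‖
      · simp only [c', if_pos hγ]
        rw [norm_sub_mul_sgn (c m) (by positivity) hγ.le]
        linarith [hc m hm, show γ = α * (β / 2) from rfl]
      · simp only [c', if_neg hγ]
        exact not_lt.mp hγ
    have hhalf : (β / 2) ^ p = β ^ p / 2 ^ p := Real.div_rpow hβ (by norm_num) p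
    have hpeel : bs.N ((γ : 𝕜) • bs.indSign (fun m => sgn (c m)) D') ^ p ≤ (β / 2) ^ p * M := by
      rw [bs.rpow_N_smul, RCLike.norm_ofReal, abs_of_nonneg (by positivity),
        Real.mul_rpow hα (by positivity), mul_comm (α ^ p), mul_assoc]
      gcongr
      exact hM D' (Finset.filter_subset _ _) _ fun m _ => norm_sgn _
    calc bs.N (∑ m ∈ D₀, c m • bs.e m) ^ p
        ≤ bs.N ((γ : 𝕜) • bs.indSign (fun m => sgn (c m)) D') ^ p
          + bs.N (∑ m ∈ D₀, c' m • bs.e m) ^ p := hsplit ▸ bs.N_padd _ _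
      _ ≤ (β / 2) ^ p * M + (β / 2) ^ p * (M / (2 ^ p - 1)
          + α ^ p * (∑ m ∈ D₀, bs.N (bs.e m) ^ p) / (2 ^ p) ^ K) :=
          add_le_add hpeel (ih (by positivity) c' hc')
      _ = _ := by
          rw [hhalf, pow_succ]
          field_simp
          ring

lemma rpow_N_sum_smul_e_le (hp : 0 < p) (D₀ : Finset ℕ) (c : ℕ → 𝕜) {α M : ℝ} (hα : 0 ≤ α)
    (hc : ∀ m ∈ D₀, ‖c m‖ ≤ α)
    (hM : ∀ D ⊆ D₀, ∀ ε : ℕ → 𝕜, IsSign ε D → α ^ p * bs.N (bs.indSign ε D) ^ p ≤ M) :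
    bs.N (∑ m ∈ D₀, c m • bs.e m) ^ p ≤ M / (2 ^ p - 1) := by
  have hM0 : 0 ≤ M := by
    simpa [indSign, bs.N_zero, Real.zero_rpow hp.ne'] using
      hM ∅ (Finset.empty_subset _) 1 (by simp [IsSign])
  have h2p : 1 < (2 : ℝ) ^ p := Real.one_lt_rpow (by norm_num) hp
  have hlim : Tendsto (fun K : ℕ => M / (2 ^ p - 1)
      + α ^ p * (∑ m ∈ D₀, bs.N (bs.e m) ^ p) / (2 ^ p) ^ K) atTop (𝓝 (M / (2 ^ p - 1))) := by
    simpa using tendsto_const_nhds.add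
      (tendsto_const_nhds.div_atTop (tendsto_pow_atTop_atTop_of_one_lt h2p))
  refine ge_of_tendsto' hlim fun K => ?_
  simpa using bs.rpow_N_sum_smul_e_le_of_iterate hp D₀ hα hM0 hM K zero_le_one c
    fun m hm => (mul_one α).symm ▸ hc m hm

def IsDisjointBlockGreedyWith (C : ℝ) : Prop :=
  ∀ (v : X) (Γ D : Finset ℕ) (ε : ℕ → 𝕜) (a : 𝕜),
    bs.IsGreedySet v Γ → D.card ≤ Γ.card → Disjoint Γ D → IsSign ε D →
    (∀ j ∈ D, bs.coord j v = a * ε j) →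
    bs.N (v - bs.proj Γ v) ≤ C * bs.N (v - a • bs.indSign ε D)

variable {bs} in
lemma IsAlmostGreedyWith.isDisjointBlockGreedyWith {C : ℝ} (h : bs.IsAlmostGreedyWith C) :
    bs.IsDisjointBlockGreedyWith C := by
  intro v Γ D ε a hΓ hcard _ _ hcoord
  rw [← bs.proj_eq_smul_indSign hcoord]
  exact h v Γ D hΓ hcard

namespace IsDisjointBlockGreedyWith

variable {bs} {C : ℝ} (hG : bs.IsDisjointBlockGreedyWith C)
include hG

lemma isQuasiGreedyWith : bs.IsQuasiGreedyWith C := by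
  intro f A hA
  simpa [indSign] using hG f A ∅ 1 0 hA (by simp) (Finset.disjoint_empty_right A) (by simp [IsSign])
    (by simp)

lemma rpow_N_sub_proj_le (hC : 0 ≤ C) (hp : 0 < p) {f : X} {A : Finset ℕ}
    (hA : bs.IsGreedySet f A) : bs.N (f - bs.proj A f) ^ p ≤ C ^ p * bs.N f ^ p :=
  rpow_le_mul_rpow_of_le_mul (bs.N_nonneg _) (bs.N_nonneg _) hC hp.le
    (hG.isQuasiGreedyWith f A hA)

lemma N_indSign_le {D F : Finset ℕ} {ε : ℕ → 𝕜} (hFD : Disjoint F D) (hcard : D.card ≤ F.card)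
    (hε : IsSign ε D) : bs.N (bs.indSign ε D) ≤ 2 * C * bs.N (bs.ind F) := by
  set v := bs.indSign ε D + (2 : 𝕜) • bs.ind F
  have hcoord (n : ℕ) : bs.coord n v = (if n ∈ D then ε n else 0) + if n ∈ F then 2 else 0 := by
    simp [v, coord_indSign, coord_ind]
  have hvD : ∀ j ∈ D, bs.coord j v = 1 * ε j := fun j hj => by
    simp [hcoord, hj, Finset.disjoint_right.mp hFD hj]
  have hvF : ∀ j ∈ F, bs.coord j v = 2 * 1 := fun j hj => by
    simp [hcoord, hj, Finset.disjoint_left.mp hFD hj]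
  have hF : bs.IsGreedySet v F := by
    intro n hn m hm
    rw [hvF n hn, hcoord m, if_neg hm, add_zero]
    split_ifs with hmD
    · simp [hε m hmD]
    · simp
  have h := hG v F D ε 1 hF hcard hFD hε hvD
  rw [bs.proj_eq_smul_indSign hvF, indSign_one, one_smul, add_sub_cancel_right,
    add_sub_cancel_left, bs.N_smul, RCLike.norm_ofNat] at h
  linarith

lemma rpow_mul_N_ind_le (hC : 0 ≤ C) (hp : 0 < p) {h : X} {Λ F : Finset ℕ} {s : ℝ}
    (hΛ : bs.IsGreedySet h Λ) (hs : 0 ≤ s) (hmin : ∀ i ∈ Λ, s ≤ ‖bs.coord i h‖)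
    (hFΛ : Disjoint F Λ) (hcard : F.card ≤ Λ.card) :
    s ^ p * bs.N (bs.ind F) ^ p ≤
      2 * C ^ p * bs.N h ^ p + (C ^ p + 1) * bs.N (bs.proj F h) ^ p := by
  set u := h - bs.proj F h + (s : 𝕜) • bs.ind F
  have hcoord (n : ℕ) : bs.coord n u = if n ∈ F then (s : 𝕜) else bs.coord n h := by
    by_cases hn : n ∈ F <;> simp [u, coord_proj, coord_ind, hn]
  have huΛ : ∀ n ∈ Λ, bs.coord n u = bs.coord n h := fun n hn => by
    rw [hcoord, if_neg (Finset.disjoint_right.mp hFΛ hn)]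
  have hu : bs.IsGreedySet u Λ := by
    intro n hn m hm
    rw [huΛ n hn, hcoord m]
    split_ifs
    · simpa [abs_of_nonneg hs] using hmin n hn
    · exact hΛ n hn m hm
  have h1 := hG u Λ F (fun _ => 1) s hu hcard hFΛ.symm (fun _ _ => norm_one)
    (fun j hj => by simp [hcoord, hj])
  rw [bs.proj_congr huΛ, indSign_one, add_sub_cancel_right] at h1
  have hsplit : (s : 𝕜) • bs.ind F = (u - bs.proj Λ h) - (h - bs.proj Λ h) + bs.proj F h := by
    simp only [u]; abel
  calc s ^ p * bs.N (bs.ind F) ^ p = bs.N ((s : 𝕜) • bs.ind F) ^ p := by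
        rw [bs.rpow_N_smul, RCLike.norm_ofReal, abs_of_nonneg hs]
    _ ≤ bs.N (u - bs.proj Λ h) ^ p + bs.N (h - bs.proj Λ h) ^ p + bs.N (bs.proj F h) ^ p := by
        rw [hsplit]
        exact (bs.N_padd _ _).trans
          (by linarith [bs.rpow_N_sub_le (u - bs.proj Λ h) (h - bs.proj Λ h)])
    _ ≤ C ^ p * (bs.N h ^ p + bs.N (bs.proj F h) ^ p) + C ^ p * bs.N h ^ p
          + bs.N (bs.proj F h) ^ p := by
        gcongr
        · exact (rpow_le_mul_rpow_of_le_mul (bs.N_nonneg _) (bs.N_nonneg _) hC hp.le h1).trans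
            (by gcongr; exact bs.rpow_N_sub_le _ _)
        · exact hG.rpow_N_sub_proj_le hC hp hΛ
    _ = _ := by ring

/-- The auxiliary set `F` is chosen where the coefficients of `h` are negligible, so the error
term `N(P_F h)` disappears in the limit. -/
lemma rpow_mul_N_indSign_le (hC : 0 ≤ C) (hp : 0 < p) {h : X} {Λ D : Finset ℕ} {ε : ℕ → 𝕜}
    {s : ℝ} (hΛ : bs.IsGreedySet h Λ) (hs : 0 ≤ s) (hmin : ∀ i ∈ Λ, s ≤ ‖bs.coord i h‖)
    (hcard : D.card ≤ Λ.card) (hε : IsSign ε D) :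
    s ^ p * bs.N (bs.indSign ε D) ^ p ≤ (2 * C) ^ p * (2 * C ^ p) * bs.N h ^ p := by
  refine le_of_forall_pos_le_add_mul (K := (2 * C) ^ p * (C ^ p + 1)) (by positivity)
    fun δ hδ => ?_
  obtain ⟨F, hFcard, hFdisj, hFsmall⟩ :=
    bs.exists_card_disjoint_rpow_N_proj_le hp h (Λ ∪ D) D.card hδ
  have hDF := hG.N_indSign_le (Finset.disjoint_union_right.mp hFdisj).2 hFcard.ge hε
  have hF := hG.rpow_mul_N_ind_le hC hp hΛ hs hmin (Finset.disjoint_union_right.mp hFdisj).1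
    (hFcard ▸ hcard)
  calc s ^ p * bs.N (bs.indSign ε D) ^ p
      ≤ s ^ p * ((2 * C) ^ p * bs.N (bs.ind F) ^ p) := by
        gcongr
        exact rpow_le_mul_rpow_of_le_mul (bs.N_nonneg _) (bs.N_nonneg _) (by positivity) hp.le hDF
    _ = (2 * C) ^ p * (s ^ p * bs.N (bs.ind F) ^ p) := by ring
    _ ≤ (2 * C) ^ p * (2 * C ^ p * bs.N h ^ p + (C ^ p + 1) * δ) := by
        gcongr
        exact hF.trans (by gcongr)
    _ = _ := by ring

end IsDisjointBlockGreedyWith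

/-- At `m₀ ∈ B \ Λ` the scalar `a` is the difference of two coefficients, each bounded by a
greedy threshold. -/
lemma exists_norm_le_two_mul_le_norm_coord {f : X} {A B Λ : Finset ℕ} {ε : ℕ → 𝕜} {a : 𝕜}
    (hA : bs.IsGreedySet f A) (hΛ : bs.IsGreedySet (f - a • bs.indSign ε B) Λ)
    (hcard : Λ.card ≤ A.card) (hAB : Disjoint A B) (hε : IsSign ε B) {m₀ : ℕ} (hm₀B : m₀ ∈ B)
    (hm₀Λ : m₀ ∉ Λ) :
    ∃ s : ℝ, 0 ≤ s ∧ ‖a‖ ≤ 2 * s ∧ ∀ i ∈ Λ, s ≤ ‖bs.coord i (f - a • bs.indSign ε B)‖ := by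
  set g := f - a • bs.indSign ε B
  have hcoord (n : ℕ) : bs.coord n g = bs.coord n f - if n ∈ B then a * ε n else 0 := by
    simp [g, coord_indSign]
  refine ⟨max ‖bs.coord m₀ f‖ ‖bs.coord m₀ g‖, by positivity, ?_,
    fun i hi => max_le ?_ (hΛ i hi m₀ hm₀Λ)⟩
  · calc ‖a‖ = ‖bs.coord m₀ f - bs.coord m₀ g‖ := by
          rw [hcoord, if_pos hm₀B, sub_sub_cancel, norm_mul, hε m₀ hm₀B, mul_one]
      _ ≤ ‖bs.coord m₀ f‖ + ‖bs.coord m₀ g‖ := norm_sub_le _ _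
      _ ≤ 2 * max ‖bs.coord m₀ f‖ ‖bs.coord m₀ g‖ := by
          linarith [le_max_left ‖bs.coord m₀ f‖ ‖bs.coord m₀ g‖,
            le_max_right ‖bs.coord m₀ f‖ ‖bs.coord m₀ g‖]
  · refine hΛ.le_norm_coord_of_card_le hcard (fun n hn => ?_) hi
    rw [hcoord, if_neg (Finset.disjoint_left.mp hAB hn), sub_zero]
    exact hA n hn m₀ (Finset.disjoint_right.mp hAB hm₀B)

variable {bs} in
lemma IsDisjointBlockGreedyWith.rpow_N_smul_indSign_sdiff_le {C : ℝ}
    (hG : bs.IsDisjointBlockGreedyWith C) (hC : 0 ≤ C) (hp : 0 < p) {f : X} {A B Λ : Finset ℕ}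
    {ε : ℕ → 𝕜} (a : 𝕜) (hA : bs.IsGreedySet f A)
    (hΛ : bs.IsGreedySet (f - a • bs.indSign ε B) Λ) (hΛA : Λ.card = A.card)
    (hBA : B.card ≤ A.card) (hAB : Disjoint A B) (hε : IsSign ε B) :
    bs.N (a • bs.indSign ε (B \ Λ)) ^ p ≤
      2 ^ p * ((2 * C) ^ p * (2 * C ^ p)) * bs.N (f - a • bs.indSign ε B) ^ p := by
  set g := f - a • bs.indSign ε B
  rcases (B \ Λ).eq_empty_or_nonempty with hempty | ⟨m₀, hm₀⟩
  · rw [hempty, indSign, Finset.sum_empty, smul_zero, bs.N_zero, Real.zero_rpow hp.ne']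
    have := bs.N_nonneg g
    positivity
  obtain ⟨s, hs, has, hmin⟩ := bs.exists_norm_le_two_mul_le_norm_coord hA hΛ hΛA.le hAB hε
    (Finset.mem_sdiff.mp hm₀).1 (Finset.mem_sdiff.mp hm₀).2
  calc bs.N (a • bs.indSign ε (B \ Λ)) ^ p = ‖a‖ ^ p * bs.N (bs.indSign ε (B \ Λ)) ^ p :=
        bs.rpow_N_smul _ _
    _ ≤ (2 * s) ^ p * bs.N (bs.indSign ε (B \ Λ)) ^ p := by
        gcongr
        exact Real.rpow_nonneg (bs.N_nonneg _) p
    _ = 2 ^ p * (s ^ p * bs.N (bs.indSign ε (B \ Λ)) ^ p) := by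
        rw [Real.mul_rpow zero_le_two hs]; ring
    _ ≤ 2 ^ p * ((2 * C) ^ p * (2 * C ^ p) * bs.N g ^ p) := by
        refine mul_le_mul_of_nonneg_left ?_ (by positivity)
        exact hG.rpow_mul_N_indSign_le hC hp hΛ hs hmin
          (hΛA ▸ (Finset.card_le_card Finset.sdiff_subset).trans hBA)
          fun j hj => hε j (Finset.mem_sdiff.mp hj).1
    _ = _ := by ring

variable {bs} in
lemma IsAlmostGreedyWith.rpow_N_sub_proj_le {C : ℝ} (hAG : bs.IsAlmostGreedyWith C) (hC : 0 ≤ C)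
    (hp : 0 < p) {f : X} {A B : Finset ℕ} {ε : ℕ → 𝕜} (a : 𝕜) (hA : bs.IsGreedySet f A)
    (hBA : B.card ≤ A.card) (hAB : Disjoint A B) (hε : IsSign ε B) :
    bs.N (f - bs.proj A f) ^ p ≤
      C ^ p * (C ^ p + 2 ^ p * ((2 * C) ^ p * (2 * C ^ p))) *
        bs.N (f - a • bs.indSign ε B) ^ p := by
  have hG := hAG.isDisjointBlockGreedyWith
  set g := f - a • bs.indSign ε B
  obtain ⟨Λ, hΛcard, hΛ⟩ := bs.exists_isGreedySet_card g A.card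
  have hkey : f - bs.proj Λ f = (g - bs.proj Λ g) + a • bs.indSign ε (B \ Λ) := by
    have hf : f = g + a • bs.indSign ε B := by simp [g]
    rw [hf, bs.proj_add, bs.proj_smul_indSign, bs.indSign_eq_add ε B Λ, smul_add]
    abel
  have hblock := hG.rpow_N_smul_indSign_sdiff_le hC hp a hA hΛ hΛcard hBA hAB hε
  calc bs.N (f - bs.proj A f) ^ p ≤ C ^ p * bs.N (f - bs.proj Λ f) ^ p :=
        rpow_le_mul_rpow_of_le_mul (bs.N_nonneg _) (bs.N_nonneg _) hC hp.le
          (hAG f A Λ hA hΛcard.le)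
    _ ≤ C ^ p * (bs.N (g - bs.proj Λ g) ^ p + bs.N (a • bs.indSign ε (B \ Λ)) ^ p) := by
        rw [hkey]
        gcongr
        exact bs.N_padd _ _
    _ ≤ C ^ p * (C ^ p * bs.N g ^ p + 2 ^ p * ((2 * C) ^ p * (2 * C ^ p)) * bs.N g ^ p) := by
        gcongr
        exact hG.rpow_N_sub_proj_le hC hp hΛ
    _ = _ := by ring

variable {bs} in
lemma IsDisjointBlockGreedyWith.rpow_N_sub_proj_le_mul {C : ℝ}
    (hG : bs.IsDisjointBlockGreedyWith C) (hC : 0 ≤ C) (hp : 0 < p) {f : X} {A B : Finset ℕ}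
    (hA : bs.IsGreedySet f A) (hBA : B.card ≤ A.card) :
    bs.N (f - bs.proj A f) ^ p ≤
      (C ^ p + (2 * C) ^ p * (2 * C ^ p) / (2 ^ p - 1)) * bs.N (f - bs.proj B f) ^ p := by
  obtain ⟨α, hα, hαA, hαB⟩ := hA.exists_threshold
  set g := f - bs.proj B f
  have hcoord : ∀ n ∉ B, bs.coord n g = bs.coord n f := fun n hn => by
    simp [g, coord_proj, hn]
  have hgreedy : bs.IsGreedySet g (A \ B) := by
    intro n hn m hm
    rw [hcoord n (Finset.mem_sdiff.mp hn).2]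
    by_cases hmB : m ∈ B
    · simp [g, coord_proj, hmB]
    · rw [hcoord m hmB]
      exact hA n (Finset.mem_sdiff.mp hn).1 m fun hmA => hm (Finset.mem_sdiff.mpr ⟨hmA, hmB⟩)
  have hkey : f - bs.proj A f = (g - bs.proj (A \ B) g) + bs.proj (B \ A) f := by
    simp only [g]
    rw [bs.proj_congr fun n hn => hcoord n (Finset.mem_sdiff.mp hn).2, bs.proj_eq_add A B,
      bs.proj_eq_add B A, Finset.inter_comm B A]
    abel
  have hP : bs.N (bs.proj (B \ A) f) ^ p ≤ (2 * C) ^ p * (2 * C ^ p) * bs.N g ^ p / (2 ^ p - 1) :=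
    bs.rpow_N_sum_smul_e_le hp (B \ A) (fun m => bs.coord m f) hα
      (fun m hm => hαB m (Finset.mem_sdiff.mp hm).2) fun D hD ε hε =>
        hG.rpow_mul_N_indSign_le hC hp hgreedy hα
          (fun i hi => (hcoord i (Finset.mem_sdiff.mp hi).2).symm ▸
            hαA i (Finset.mem_sdiff.mp hi).1)
          ((Finset.card_le_card hD).trans (Finset.card_sdiff_le_card_sdiff_iff.mpr hBA)) hε
  calc bs.N (f - bs.proj A f) ^ p
        ≤ bs.N (g - bs.proj (A \ B) g) ^ p + bs.N (bs.proj (B \ A) f) ^ p :=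
        hkey ▸ bs.N_padd _ _
    _ ≤ C ^ p * bs.N g ^ p + (2 * C) ^ p * (2 * C ^ p) * bs.N g ^ p / (2 ^ p - 1) :=
        add_le_add (hG.rpow_N_sub_proj_le hC hp hgreedy) hP
    _ = _ := by ring

end PBasis

theorem almost_greedy_iff_disjoint_polynomials_general {𝕜 : Type*} [RCLike 𝕜] {X : Type*}
    [AddCommGroup X] [Module 𝕜 X] {p : ℝ} (hp : 0 < p) (bs : PBasis 𝕜 X p) :
    (∃ C : ℝ, 0 < C ∧ bs.IsAlmostGreedyWith C) ↔
      (∃ C : ℝ, 0 < C ∧ ∀ (f : X) (A B : Finset ℕ) (ε : ℕ → 𝕜) (a : 𝕜),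
        bs.IsGreedySet f A → B.card ≤ A.card → Disjoint A B → PBasis.IsSign ε B →
        bs.N (f - bs.proj A f) ≤ C * bs.N (f - a • bs.indSign ε B)) := by
  have h2p : 0 < (2 : ℝ) ^ p - 1 := sub_pos.mpr (Real.one_lt_rpow one_lt_two hp)
  constructor
  · rintro ⟨C, hC, hAG⟩
    refine ⟨_, ?_, fun f A B ε a hA hBA hAB hε =>
      le_rpow_inv_mul_of_rpow_le_mul hp (bs.N_nonneg _) (bs.N_nonneg _) ?_
        (hAG.rpow_N_sub_proj_le hC.le hp a hA hBA hAB hε)⟩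
    all_goals positivity
  · rintro ⟨C, hC, h⟩
    have hG : bs.IsDisjointBlockGreedyWith C := fun v Γ D ε a hΓ hD hΓD hε _ =>
      h v Γ D ε a hΓ hD hΓD hε
    refine ⟨_, ?_, fun f A B hA hBA =>
      le_rpow_inv_mul_of_rpow_le_mul hp (bs.N_nonneg _) (bs.N_nonneg _) ?_
        (hG.rpow_N_sub_proj_le_mul hC.le hp hA hBA)⟩
    all_goals positivity

/-- (Theorem 1.7, i) ⟺ iii).) A basis of a `p`-Banach space is almost greedy
iff there is `C > 0` with `‖f − P_A(f)‖ ≤ C‖f − a·𝟙_{ε,B}‖` for all `f`, greedy sets `A`,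
sets `B` with `|B| ≤ |A|` and `A ∩ B = ∅`, signs `ε` on `B`, and scalars `a`. -/
theorem almost_greedy_iff_disjoint_polynomials {𝕜 : Type*} [RCLike 𝕜] {X : Type*}
    [AddCommGroup X] [Module 𝕜 X] {p : ℝ} (hp : 0 < p) (hp1 : p ≤ 1) (bs : PBasis 𝕜 X p) :
    (∃ C : ℝ, 0 < C ∧ bs.IsAlmostGreedyWith C) ↔
      (∃ C : ℝ, 0 < C ∧ ∀ (f : X) (A B : Finset ℕ) (ε : ℕ → 𝕜) (a : 𝕜),
        bs.IsGreedySet f A → B.card ≤ A.card → Disjoint A B → PBasis.IsSign ε B →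
        bs.N (f - bs.proj A f) ≤ C * bs.N (f - a • bs.indSign ε B)) :=
  almost_greedy_iff_disjoint_polynomials_general hp bs
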